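/- Let X ∈ ℝ^{n×d} have full column rank with smallest singular value α, and define u(λ) = Xᵀ(X w(λ) − y) where w(λ) is the Lasso minimizer. Then for 0 < λ₁ ≤ λ₂, ‖u(λ₂) − u(λ₁)‖₂ ≤ (‖X‖₂² √d / α²)·(λ₂ − λ₁). -/
import Mathlib

noncomputable def euclNorm {d : ℕ} (v : Fin d → ℝ) : ℝ := Real.sqrt (∑ i, v i ^ 2)

/-- The Lasso objective (1/2)‖Xw − y‖₂² + λ‖w‖₁. -/
noncomputable def lassoObj {n d : ℕ} (X : Matrix (Fin n) (Fin d) ℝ) (y : Fin n → ℝ)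
    (l : ℝ) (w : Fin d → ℝ) : ℝ :=
  (1 / 2) * euclNorm (X.mulVec w - y) ^ 2 + l * ∑ i, |w i|

lemma euclNorm_nonneg {d : ℕ} (v : Fin d → ℝ) : 0 ≤ euclNorm v := Real.sqrt_nonneg _

lemma euclNorm_sq {d : ℕ} (v : Fin d → ℝ) : euclNorm v ^ 2 = ∑ i, v i ^ 2 := by
  unfold euclNorm
  exact Real.sq_sqrt (Finset.sum_nonneg fun i _ => sq_nonneg _)

lemma sq_euclNorm_le {d : ℕ} {v : Fin d → ℝ} {c : ℝ} (hc : 0 ≤ c)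
    (h : euclNorm v ≤ c) : ∑ i, v i ^ 2 ≤ c ^ 2 := by
  rw [← euclNorm_sq]
  exact pow_le_pow_left₀ (euclNorm_nonneg v) h 2

/-- Cauchy–Schwarz for the dot product. -/
lemma dot_le_euclNorm {d : ℕ} (a b : Fin d → ℝ) :
    ∑ i, a i * b i ≤ euclNorm a * euclNorm b := by
  have h := Finset.sum_mul_sq_le_sq_mul_sq Finset.univ a b
  have hab : euclNorm a * euclNorm b = Real.sqrt ((∑ i, a i ^ 2) * ∑ i, b i ^ 2) := by
    unfold euclNorm
    rw [← Real.sqrt_mul (Finset.sum_nonneg fun i _ => sq_nonneg _)]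
  rw [hab]
  calc ∑ i, a i * b i ≤ |∑ i, a i * b i| := le_abs_self _
    _ = Real.sqrt ((∑ i, a i * b i) ^ 2) := (Real.sqrt_sq_eq_abs _).symm
    _ ≤ Real.sqrt ((∑ i, a i ^ 2) * ∑ i, b i ^ 2) := Real.sqrt_le_sqrt h

lemma l1_le_sqrt_l2 {d : ℕ} (v : Fin d → ℝ) :
    ∑ i, |v i| ≤ Real.sqrt d * euclNorm v := by
  have h := dot_le_euclNorm (fun _ : Fin d => (1 : ℝ)) (fun i => |v i|)
  simp only [one_mul] at h
  have h1 : euclNorm (fun _ : Fin d => (1 : ℝ)) = Real.sqrt d := by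
    unfold euclNorm; simp
  have h2 : euclNorm (fun i => |v i|) = euclNorm v := by
    unfold euclNorm; simp [sq_abs]
  rw [h1, h2] at h
  exact h

/-- Strong-convexity based minimizer inequality. -/
lemma minimizer_ineq {n d : ℕ} (X : Matrix (Fin n) (Fin d) ℝ) (y : Fin n → ℝ) (α : ℝ)
    (hα : 0 < α) (hmin : ∀ v : Fin d → ℝ, α * euclNorm v ≤ euclNorm (X.mulVec v))
    (l : ℝ) (hl : 0 ≤ l) (a : Fin d → ℝ)
    (ha : ∀ v : Fin d → ℝ, lassoObj X y l a ≤ lassoObj X y l v) (b : Fin d → ℝ) :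
    lassoObj X y l a + α ^ 2 / 2 * ∑ i, (b i - a i) ^ 2 ≤ lassoObj X y l b := by
  set S : ℝ := ∑ i, (b i - a i) ^ 2 with hS
  have hSnn : 0 ≤ S := Finset.sum_nonneg fun i _ => sq_nonneg _
  -- strong convexity bound for each t ∈ (0,1)
  have key : ∀ t : ℝ, 0 < t → t < 1 →
      lassoObj X y l a + α ^ 2 / 2 * (1 - t) * S ≤ lassoObj X y l b := by
    intro t ht0 ht1
    set c : Fin d → ℝ := fun i => (1 - t) * a i + t * b i with hc
    have hXc : ∀ i, (X.mulVec c - y) i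
        = (1 - t) * ((X.mulVec a - y) i) + t * ((X.mulVec b - y) i) := by
      intro i
      simp only [Pi.sub_apply, Matrix.mulVec, dotProduct, hc]
      rw [show (∑ j, X i j * ((1-t)*a j + t * b j))
          = (1-t)*(∑ j, X i j * a j) + t*(∑ j, X i j * b j) from by
        rw [Finset.mul_sum, Finset.mul_sum, ← Finset.sum_add_distrib]
        exact Finset.sum_congr rfl fun j _ => by ring]
      ring
    -- quadratic identity for the squared norm part
    have hquad : euclNorm (X.mulVec c - y) ^ 2
        = (1 - t) * euclNorm (X.mulVec a - y) ^ 2 + t * euclNorm (X.mulVec b - y) ^ 2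
          - t * (1 - t) * ∑ i, ((X.mulVec a - y) i - (X.mulVec b - y) i) ^ 2 := by
      rw [euclNorm_sq, euclNorm_sq, euclNorm_sq]
      rw [Finset.sum_congr rfl (fun i _ => by rw [hXc i])]
      rw [Finset.mul_sum, Finset.mul_sum, Finset.mul_sum, ← Finset.sum_add_distrib,
        ← Finset.sum_sub_distrib]
      exact Finset.sum_congr rfl fun i _ => by ring
    -- X(a-b) lower bound
    have hXab : α ^ 2 * S ≤ ∑ i, ((X.mulVec a - y) i - (X.mulVec b - y) i) ^ 2 := by
      have heq : ∀ i, (X.mulVec a - y) i - (X.mulVec b - y) i = X.mulVec (a - b) i := by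
        intro i
        simp [Matrix.mulVec_sub]
      rw [Finset.sum_congr rfl fun i _ => by rw [heq i]]
      have h1 := hmin (a - b)
      have h2 : (α * euclNorm (a - b)) ^ 2 ≤ euclNorm (X.mulVec (a - b)) ^ 2 :=
        pow_le_pow_left₀ (mul_nonneg hα.le (euclNorm_nonneg _)) h1 2
      rw [mul_pow, euclNorm_sq, euclNorm_sq] at h2
      simp only [Pi.sub_apply] at h2
      have hSe : ∑ i, (a i - b i) ^ 2 = S := by
        rw [hS]; exact Finset.sum_congr rfl fun i _ => by ring
      rw [hSe] at h2
      exact h2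
    -- ℓ1 convexity
    have hl1 : ∑ i, |c i| ≤ (1 - t) * ∑ i, |a i| + t * ∑ i, |b i| := by
      rw [Finset.mul_sum, Finset.mul_sum, ← Finset.sum_add_distrib]
      refine Finset.sum_le_sum fun i _ => ?_
      calc |c i| = |(1 - t) * a i + t * b i| := rfl
        _ ≤ |(1 - t) * a i| + |t * b i| := abs_add_le _ _
        _ = (1 - t) * |a i| + t * |b i| := by
            rw [abs_mul, abs_mul, abs_of_nonneg (by linarith), abs_of_nonneg ht0.le]
    -- combine
    have hFc : lassoObj X y l c ≤ (1 - t) * lassoObj X y l a + t * lassoObj X y l b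
        - α ^ 2 / 2 * (t * (1 - t)) * S := by
      unfold lassoObj
      rw [hquad]
      have hterm : t * (1 - t) * (α ^ 2 * S)
          ≤ t * (1 - t) * ∑ i, ((X.mulVec a - y) i - (X.mulVec b - y) i) ^ 2 :=
        mul_le_mul_of_nonneg_left hXab (by nlinarith)
      nlinarith [mul_le_mul_of_nonneg_left hl1 hl]
    have hac := ha c
    have hab' : lassoObj X y l a + α ^ 2 / 2 * ((1 - t) * S) ≤ lassoObj X y l b := by
      have := le_trans hac hFc
      have ht0' : (0:ℝ) < t := ht0
      nlinarith
    linarith [hab']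
  -- take t → 0
  refine le_of_forall_pos_le_add fun ε hε => ?_
  set K : ℝ := α ^ 2 / 2 * S with hK
  have hKnn : 0 ≤ K := mul_nonneg (by positivity) hSnn
  rcases eq_or_lt_of_le hKnn with hK0 | hKpos
  · have h := key (1/2) (by norm_num) (by norm_num)
    have hexp : α ^ 2 / 2 * (1 - 1/2) * S = K / 2 := by rw [hK]; ring
    linarith
  · set t : ℝ := min (1/2) (ε / K) with htdef
    have ht0 : 0 < t := lt_min (by norm_num) (div_pos hε hKpos)
    have ht1 : t < 1 := lt_of_le_of_lt (min_le_left _ _) (by norm_num)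
    have h := key t ht0 ht1
    have htK : t * K ≤ ε := by
      have : t ≤ ε / K := min_le_right _ _
      calc t * K ≤ (ε / K) * K := mul_le_mul_of_nonneg_right this hKnn
        _ = ε := by field_simp
    have hexp : α ^ 2 / 2 * (1 - t) * S = K - t * K := by rw [hK]; ring
    linarith

/-- Lipschitzness of u(λ) = Xᵀ(Xw(λ) − y). -/
theorem stmt_4 {n d : ℕ} (X : Matrix (Fin n) (Fin d) ℝ) (y : Fin n → ℝ) (α B : ℝ)
    (hα : 0 < α) (hmin : ∀ v : Fin d → ℝ, α * euclNorm v ≤ euclNorm (X.mulVec v))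
    (hB : ∀ v : Fin d → ℝ, euclNorm (X.mulVec v) ≤ B * euclNorm v)
    (w : ℝ → (Fin d → ℝ))
    (hw : ∀ l : ℝ, 0 < l → ∀ v : Fin d → ℝ, lassoObj X y l (w l) ≤ lassoObj X y l v)
    (u : ℝ → (Fin d → ℝ))
    (hu : ∀ l : ℝ, u l = X.transpose.mulVec (X.mulVec (w l) - y))
    (l₁ l₂ : ℝ) (hl₁ : 0 < l₁) (hl₁₂ : l₁ ≤ l₂) :
    euclNorm (u l₂ - u l₁) ≤ B ^ 2 * Real.sqrt d / α ^ 2 * (l₂ - l₁) := by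
  rcases Nat.eq_zero_or_pos d with hd | hd
  · subst hd
    have h0 : euclNorm (u l₂ - u l₁) = 0 := by unfold euclNorm; simp
    rw [h0]
    have : Real.sqrt (0:ℕ) = 0 := by simp
    rw [this]
    simp
  -- d > 0, so α ≤ B, in particular 0 < B
  have hB0 : 0 < B := by
    set e : Fin d → ℝ := fun i => if i = ⟨0, hd⟩ then 1 else 0 with he
    have hne : euclNorm e = 1 := by
      unfold euclNorm
      rw [Finset.sum_eq_single ⟨0, hd⟩]
      · simp [he]
      · intro j _ hj; simp [he, hj]
      · intro h; exact absurd (Finset.mem_univ _) h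
    have h1 := hmin e
    have h2 := hB e
    rw [hne] at h1 h2
    simp only [mul_one] at h1 h2
    linarith
  set Δ : Fin d → ℝ := w l₂ - w l₁ with hΔ
  -- Lipschitz bound on w
  have hwlip : euclNorm Δ ≤ Real.sqrt d / α ^ 2 * (l₂ - l₁) := by
    have hl₂ : 0 < l₂ := lt_of_lt_of_le hl₁ hl₁₂
    have h1 := minimizer_ineq X y α hα hmin l₁ hl₁.le (w l₁) (hw l₁ hl₁) (w l₂)
    have h2 := minimizer_ineq X y α hα hmin l₂ hl₂.le (w l₂) (hw l₂ hl₂) (w l₁)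
    have hSsym : ∑ i, (w l₁ i - w l₂ i) ^ 2 = ∑ i, (w l₂ i - w l₁ i) ^ 2 :=
      Finset.sum_congr rfl fun i _ => by ring
    rw [hSsym] at h2
    set S : ℝ := ∑ i, (w l₂ i - w l₁ i) ^ 2 with hS
    -- add the two inequalities
    unfold lassoObj at h1 h2
    have hsum : α ^ 2 * S ≤ (l₂ - l₁) * (∑ i, |w l₁ i| - ∑ i, |w l₂ i|) := by nlinarith
    have habs : ∑ i, |w l₁ i| - ∑ i, |w l₂ i| ≤ ∑ i, |Δ i| := by
      rw [← Finset.sum_sub_distrib]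
      refine Finset.sum_le_sum fun i _ => ?_
      have : |w l₁ i| ≤ |Δ i| + |w l₂ i| := by
        have : w l₁ i = w l₂ i - Δ i := by simp [hΔ]
        rw [this]
        calc |w l₂ i - Δ i| ≤ |w l₂ i| + |Δ i| := abs_sub _ _
          _ = |Δ i| + |w l₂ i| := by ring
      linarith
    have hl2 : ∑ i, |Δ i| ≤ Real.sqrt d * euclNorm Δ := l1_le_sqrt_l2 Δ
    have hSen : S = euclNorm Δ ^ 2 := by
      rw [euclNorm_sq, hS]
      exact Finset.sum_congr rfl fun i _ => by simp [hΔ]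
    have hchain : α ^ 2 * euclNorm Δ ^ 2 ≤ (l₂ - l₁) * (Real.sqrt d * euclNorm Δ) := by
      rw [← hSen]
      calc α ^ 2 * S ≤ (l₂ - l₁) * (∑ i, |w l₁ i| - ∑ i, |w l₂ i|) := hsum
        _ ≤ (l₂ - l₁) * (Real.sqrt d * euclNorm Δ) := by
            have hll : 0 ≤ l₂ - l₁ := by linarith
            exact mul_le_mul_of_nonneg_left (le_trans habs hl2) hll
    rcases eq_or_lt_of_le (euclNorm_nonneg Δ) with h0 | hpos
    · rw [← h0]
      have : 0 ≤ Real.sqrt d / α ^ 2 * (l₂ - l₁) := by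
        apply mul_nonneg (div_nonneg (Real.sqrt_nonneg _) (by positivity)); linarith
      linarith
    · rw [div_mul_eq_mul_div, le_div_iff₀ (by positivity)]
      have := mul_le_mul_of_nonneg_right hchain (le_of_lt (inv_pos.mpr hpos))
      calc euclNorm Δ * α ^ 2
          = (α ^ 2 * euclNorm Δ ^ 2) * (euclNorm Δ)⁻¹ := by field_simp
        _ ≤ ((l₂ - l₁) * (Real.sqrt d * euclNorm Δ)) * (euclNorm Δ)⁻¹ := this
        _ = Real.sqrt d * (l₂ - l₁) := by field_simp
  -- operator norm bound: ‖XᵀXΔ‖ ≤ B²‖Δ‖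
  have hdiff : u l₂ - u l₁ = X.transpose.mulVec (X.mulVec Δ) := by
    rw [hu l₂, hu l₁, hΔ]
    funext i
    simp [Matrix.mulVec_sub, Matrix.sub_mulVec]
  have hop : euclNorm (X.transpose.mulVec (X.mulVec Δ)) ≤ B ^ 2 * euclNorm Δ := by
    set z : Fin d → ℝ := X.transpose.mulVec (X.mulVec Δ) with hz
    have hdot : euclNorm z ^ 2 = ∑ i, (X.mulVec Δ) i * (X.mulVec z) i := by
      rw [euclNorm_sq]
      have h1 : ∑ i, z i ^ 2 = ∑ i, z i * z i :=
        Finset.sum_congr rfl fun i _ => sq (z i)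
      rw [h1]
      have hz' : z = Matrix.vecMul (X.mulVec Δ) X := by rw [hz, Matrix.mulVec_transpose]
      have h2 : dotProduct z z = dotProduct (X.mulVec Δ) (X.mulVec z) :=
        calc dotProduct z z
            = dotProduct (Matrix.vecMul (X.mulVec Δ) X) z := by rw [← hz']
          _ = dotProduct (X.mulVec Δ) (X.mulVec z) :=
              (Matrix.dotProduct_mulVec _ _ _).symm
      simpa [dotProduct] using h2
    have hcs : ∑ i, (X.mulVec Δ) i * (X.mulVec z) i
        ≤ euclNorm (X.mulVec Δ) * euclNorm (X.mulVec z) := dot_le_euclNorm _ _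
    have hbd : euclNorm (X.mulVec Δ) * euclNorm (X.mulVec z)
        ≤ (B * euclNorm Δ) * (B * euclNorm z) := by
      exact mul_le_mul (hB Δ) (hB z) (euclNorm_nonneg _)
        (mul_nonneg hB0.le (euclNorm_nonneg _))
    have hfinal : euclNorm z ^ 2 ≤ B ^ 2 * euclNorm Δ * euclNorm z := by
      calc euclNorm z ^ 2 = ∑ i, (X.mulVec Δ) i * (X.mulVec z) i := hdot
        _ ≤ (B * euclNorm Δ) * (B * euclNorm z) := le_trans hcs hbd
        _ = B ^ 2 * euclNorm Δ * euclNorm z := by ring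
    rcases eq_or_lt_of_le (euclNorm_nonneg z) with h0 | hpos
    · rw [← h0]
      exact mul_nonneg (by positivity) (euclNorm_nonneg _)
    · nlinarith
  rw [hdiff]
  calc euclNorm (X.transpose.mulVec (X.mulVec Δ)) ≤ B ^ 2 * euclNorm Δ := hop
    _ ≤ B ^ 2 * (Real.sqrt d / α ^ 2 * (l₂ - l₁)) :=
        mul_le_mul_of_nonneg_left hwlip (by positivity)
    _ = B ^ 2 * Real.sqrt d / α ^ 2 * (l₂ - l₁) := by ring
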